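/- arXiv:1912.05329 — 2 statements merged into one kernel-verified Lean document; each statement's English description precedes it below -/
import Mathlib

section
/- Let G be a finite group, N = S₁ × ⋯ × S_t a normal subgroup that is a direct product of nonabelian simple groups S_i permuted transitively by conjugation in G, and let Q = P ∩ N for P a Sylow p-subgroup of G, where Q ∩ S_i ≠ 1 for each i. Then C_G(Q) ≤ M := ⋂ᵢ N_G(S_i). -/
namespace Subgroup

variable {G : Type*} [Group G]

theorem le_map_conj_of_le_centralizer {H K : Subgroup G} {x : G}
    (hx : x ∈ centralizer (H : Set G)) (hHK : H ≤ K) :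
    H ≤ K.map (MulAut.conj x).toMonoidHom := fun q hq =>
  ⟨q, hHK hq, by simp [MulAut.conj_apply, (mem_centralizer_iff.mp hx q hq).symm]⟩

theorem map_conj_eq_self_of_le_centralizer {ι : Type*} {S : ι → Subgroup G} {H : Subgroup G}
    {x : G} {i j : ι} (hdisj : ∀ i j, i ≠ j → S i ⊓ S j = ⊥)
    (hj : (S i).map (MulAut.conj x).toMonoidHom = S j)
    (hx : x ∈ centralizer (H : Set G)) (hHi : H ≤ S i) (hH : H ≠ ⊥) :
    (S i).map (MulAut.conj x).toMonoidHom = S i := by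
  obtain rfl : j = i := by
    by_contra hne
    refine hH (eq_bot_iff.mpr ?_)
    rw [← hdisj i j (Ne.symm hne)]
    exact le_inf hHi (hj ▸ le_map_conj_of_le_centralizer hx hHi)
  exact hj

end Subgroup

theorem stmt_10_general {G : Type*} [Group G]
    (t : ℕ) (S : Fin t → Subgroup G)
    (hperm : ∀ (g : G) (i : Fin t), ∃ j, (S i).map (MulAut.conj g).toMonoidHom = S j)
    (hdisj : ∀ i j, i ≠ j → S i ⊓ S j = ⊥)
    (Q : Subgroup G)
    (hQi : ∀ i, Q ⊓ S i ≠ ⊥) :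
    Subgroup.centralizer (Q : Set G) ≤ ⨅ i, Subgroup.normalizer (S i : Set G) := by
  refine fun x hx => Subgroup.mem_iInf.mpr fun i => ?_
  obtain ⟨j, hj⟩ := hperm x i
  have hxi : x ∈ Subgroup.centralizer ((Q ⊓ S i : Subgroup G) : Set G) :=
    Subgroup.centralizer_le (fun _ hq => hq.1) hx
  exact Subgroup.mem_normalizer_iff_map_conj_eq.mpr
    (Subgroup.map_conj_eq_self_of_le_centralizer hdisj hj hxi inf_le_right (hQi i))

/-- Let `N = S₁ × ⋯ × S_t ⊴ G` be a direct product of nonabelian simple subgroups permuted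
(transitively) by conjugation in `G`, and let `Q = P ∩ N` for `P ∈ Syl_p(G)` with
`Q ∩ Sᵢ ≠ 1` for each `i`.  Then `C_G(Q) ≤ M = ⋂ᵢ N_G(Sᵢ)`. -/
theorem stmt_10 {G : Type*} [Group G] [Finite G] {p : ℕ} [Fact p.Prime]
    (t : ℕ) (ht : 0 < t) (S : Fin t → Subgroup G) (N : Subgroup G) (hN : N.Normal)
    (hNeq : N = ⨆ i, S i)
    (hsimple : ∀ i, IsSimpleGroup (S i))
    (hnonab : ∀ i, ∃ a b : S i, a * b ≠ b * a)
    (hperm : ∀ (g : G) (i : Fin t), ∃ j, (S i).map (MulAut.conj g).toMonoidHom = S j)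
    (hdisj : ∀ i j, i ≠ j → S i ⊓ S j = ⊥)
    (P : Sylow p G) (Q : Subgroup G) (hQ : Q = (P : Subgroup G) ⊓ N)
    (hQi : ∀ i, Q ⊓ S i ≠ ⊥) :
    Subgroup.centralizer (Q : Set G) ≤ ⨅ i, Subgroup.normalizer (S i : Set G) :=
  stmt_10_general t S hperm hdisj Q hQi
end

section
/- Let G be a finite group, and suppose P ∈ Syl_p(G) is cyclic and G is not p-solvable. Then for any normal subgroup W of G, either p ∤ |W| or p ∤ [G : W]. -/
/-- A finite group `G` is `p`-solvable if it has a subnormal series `⊥ = H₀ ⊴ H₁ ⊴ ⋯ ⊴ H_n = ⊤`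
in which each factor is either a `p`-group or a `p'`-group. -/
def IsPSolvable (p : ℕ) (G : Type*) [Group G] : Prop :=
  ∃ (n : ℕ) (s : Fin (n + 1) → Subgroup G),
    s 0 = ⊥ ∧ s (Fin.last n) = ⊤ ∧
    ∀ i : Fin n,
      s i.castSucc ≤ s i.succ ∧
      ((s i.castSucc).subgroupOf (s i.succ)).Normal ∧
      ((∃ k : ℕ, (s i.castSucc).relIndex (s i.succ) = p ^ k) ∨
        ¬ p ∣ (s i.castSucc).relIndex (s i.succ))

open Subgroup

section Series

variable {G : Type*} [Group G] {G' : Type*} [Group G'] {p : ℕ}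

lemma bot_subgroupOf_normal (K : Subgroup G) : ((⊥ : Subgroup G).subgroupOf K).Normal := by
  rw [bot_subgroupOf]; infer_instance

lemma isPSolvable_onestep
    (h : (∃ k, Nat.card G = p ^ k) ∨ ¬ p ∣ Nat.card G) : IsPSolvable p G := by
  refine ⟨1, ![⊥, ⊤], rfl, rfl, ?_⟩
  intro i
  have hi : i = 0 := Subsingleton.elim i 0
  subst hi
  have h0 : (![⊥, ⊤] : Fin 2 → Subgroup G) (Fin.castSucc 0) = ⊥ := rfl
  have h1 : (![⊥, ⊤] : Fin 2 → Subgroup G) (Fin.succ 0) = ⊤ := rfl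
  rw [h0, h1]
  refine ⟨bot_le, bot_subgroupOf_normal ⊤, ?_⟩
  rw [relIndex_bot_left]
  rwa [Nat.card_congr Subgroup.topEquiv.toEquiv]

/-- restriction of `π` to a map `comap π B → B`. -/
private def resMap (π : G →* G') (B : Subgroup G') : ↥(B.comap π) →* ↥B :=
  (π.domRestrict (B.comap π)).codRestrict B (fun x => x.2)

private lemma resMap_surjective (π : G →* G') (hs : Function.Surjective π) (B : Subgroup G') :
    Function.Surjective (resMap π B) := by
  rintro ⟨b, hb⟩
  obtain ⟨g, rfl⟩ := hs b
  exact ⟨⟨g, hb⟩, rfl⟩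

private lemma comap_subgroupOf_eq (π : G →* G') (A B : Subgroup G') :
    (A.comap π).subgroupOf (B.comap π) = (A.subgroupOf B).comap (resMap π B) := by
  ext x
  rfl

lemma comap_subgroupOf_normal (π : G →* G') {A B : Subgroup G'}
    (hn : (A.subgroupOf B).Normal) :
    ((A.comap π).subgroupOf (B.comap π)).Normal := by
  rw [comap_subgroupOf_eq]
  exact hn.comap _

lemma comap_relIndex (π : G →* G') (hs : Function.Surjective π) (A B : Subgroup G') :
    (A.comap π).relIndex (B.comap π) = A.relIndex B := by
  have : (A.comap π).relIndex (B.comap π) = ((A.subgroupOf B).comap (resMap π B)).index := by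
    rw [Subgroup.relIndex, comap_subgroupOf_eq]
  rw [this, index_comap_of_surjective _ (resMap_surjective π hs B)]
  rfl


lemma isPSolvable_prepend (π : G →* G') (hs : Function.Surjective π)
    (hker : (∃ k, Nat.card π.ker = p ^ k) ∨ ¬ p ∣ Nat.card π.ker)
    (h : IsPSolvable p G') : IsPSolvable p G := by
  obtain ⟨l, u, hu0, hul, hu⟩ := h
  set t : Fin (l + 2) → Subgroup G := Fin.cases ⊥ (fun j => (u j).comap π) with ht
  have ht0 : t 0 = ⊥ := by simp [ht]
  have hts : ∀ j : Fin (l + 1), t (Fin.succ j) = (u j).comap π := by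
    intro j; simp [ht]
  refine ⟨l + 1, t, ht0, ?_, ?_⟩
  · have : Fin.last (l + 1) = Fin.succ (Fin.last l) := rfl
    rw [this, hts, hul, comap_top]
  · intro i
    induction i using Fin.cases with
    | zero =>
        have h0 : (Fin.castSucc (0 : Fin (l + 1))) = (0 : Fin (l + 2)) := rfl
        have h1 : (Fin.succ (0 : Fin (l+1))) = Fin.succ (0 : Fin (l+1)) := rfl
        rw [h0, ht0, hts, hu0, MonoidHom.comap_bot]
        exact ⟨bot_le, bot_subgroupOf_normal _, by rw [relIndex_bot_left]; exact hker⟩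
    | succ j =>
        obtain ⟨hle, hnorm, hrel⟩ := hu j
        have h1 : Fin.castSucc (Fin.succ j) = Fin.succ (Fin.castSucc j) := rfl
        rw [h1, hts, hts]
        refine ⟨comap_mono hle, comap_subgroupOf_normal π hnorm, ?_⟩
        rw [comap_relIndex π hs]
        exact hrel

end Series

section Append

variable {G : Type*} [Group G] {p : ℕ}

/-- inclusion `B.map C.subtype → B` for `B : Subgroup ↥C`, as an equivalence-like hom. -/
private def mapDown (C : Subgroup G) (B : Subgroup ↥C) : ↥(B.map C.subtype) →* ↥B where
  toFun x := ⟨⟨(x : G), by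
      obtain ⟨b, hb, hbe⟩ := x.2
      rw [← hbe]; exact b.2⟩, by
      obtain ⟨b, hb, hbe⟩ := x.2
      have : b = ⟨(x : G), by rw [← hbe]; exact b.2⟩ := Subtype.ext (by rw [← hbe]; rfl)
      rw [← this]; exact hb⟩
  map_one' := rfl
  map_mul' x y := rfl

private lemma mapDown_surjective (C : Subgroup G) (B : Subgroup ↥C) :
    Function.Surjective (mapDown C B) := by
  rintro ⟨b, hb⟩
  refine ⟨⟨(b : G), ⟨b, hb, rfl⟩⟩, ?_⟩
  apply Subtype.ext; apply Subtype.ext; rfl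

private lemma map_subgroupOf_eq (C : Subgroup G) (A B : Subgroup ↥C) :
    (A.map C.subtype).subgroupOf (B.map C.subtype) = (A.subgroupOf B).comap (mapDown C B) := by
  ext x
  constructor
  · rintro ⟨a, ha, hae⟩
    have : a = ((mapDown C B) x : ↥C) := Subtype.ext hae
    show ((mapDown C B) x : ↥C) ∈ A
    rw [← this]; exact ha
  · intro hx
    exact ⟨((mapDown C B) x : ↥C), hx, rfl⟩

lemma map_subgroupOf_normal (C : Subgroup G) {A B : Subgroup ↥C}
    (hn : (A.subgroupOf B).Normal) :
    ((A.map C.subtype).subgroupOf (B.map C.subtype)).Normal := by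
  rw [map_subgroupOf_eq]
  exact hn.comap _

lemma map_relIndex (C : Subgroup G) (A B : Subgroup ↥C) :
    (A.map C.subtype).relIndex (B.map C.subtype) = A.relIndex B := by
  have : (A.map C.subtype).relIndex (B.map C.subtype)
      = ((A.subgroupOf B).comap (mapDown C B)).index := by
    rw [Subgroup.relIndex, map_subgroupOf_eq]
  rw [this, Subgroup.index_comap_of_surjective _ (mapDown_surjective C B)]
  rfl

lemma map_subtype_top' (C : Subgroup G) : (⊤ : Subgroup ↥C).map C.subtype = C := by
  rw [← MonoidHom.range_eq_map, Subgroup.range_subtype]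

lemma isPSolvable_append_top (C : Subgroup G) (hC : C.Normal)
    (hidx : (∃ k, C.index = p ^ k) ∨ ¬ p ∣ C.index)
    (h : IsPSolvable p ↥C) : IsPSolvable p G := by
  obtain ⟨m, s, hs0, hsl, hs⟩ := h
  set t : Fin (m + 2) → Subgroup G := Fin.lastCases ⊤ (fun i => (s i).map C.subtype) with ht
  have htl : t (Fin.last (m + 1)) = ⊤ := by simp [ht]
  have htc : ∀ j : Fin (m + 1), t (Fin.castSucc j) = (s j).map C.subtype := by
    intro j; simp [ht]
  refine ⟨m + 1, t, ?_, htl, ?_⟩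
  · have h0 : (0 : Fin (m + 2)) = Fin.castSucc (0 : Fin (m + 1)) := rfl
    rw [h0, htc, hs0, Subgroup.map_bot]
  · intro i
    induction i using Fin.lastCases with
    | last =>
        have e1 : t ((Fin.last m).castSucc) = (s (Fin.last m)).map C.subtype := htc _
        have e2 : t ((Fin.last m).succ) = ⊤ := by
          have : (Fin.last m).succ = Fin.last (m + 1) := rfl
          rw [this, htl]
        rw [e1, e2, hsl, map_subtype_top' C]
        refine ⟨le_top, ?_, ?_⟩
        · have : C.subgroupOf ⊤ = C.comap (⊤ : Subgroup G).subtype := rfl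
          rw [this]
          exact hC.comap _
        · rw [Subgroup.relIndex_top_right]
          exact hidx
    | cast j =>
        obtain ⟨hle, hnorm, hrel⟩ := hs j
        have e1 : t ((Fin.castSucc j).castSucc) = (s (Fin.castSucc j)).map C.subtype := htc _
        have e2 : t ((Fin.castSucc j).succ) = (s (Fin.succ j)).map C.subtype := by
          have : (Fin.castSucc j).succ = Fin.castSucc (Fin.succ j) := rfl
          rw [this, htc]
        rw [e1, e2]
        exact ⟨Subgroup.map_mono hle, map_subgroupOf_normal C hnorm,
          by rw [map_relIndex C]; exact hrel⟩

end Append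

section NT

lemma nt_lemma {p N m k : ℕ} (hp : p.Prime) (hN : 0 < N) (hm : ¬ p ∣ m) (hm0 : 0 < m)
    (hkm : k ^ m ≡ 1 [MOD p ^ N]) (hk1 : ¬ k ≡ 1 [MOD p ^ N]) : ¬ p ∣ k - 1 := by
  haveI : Fact p.Prime := ⟨hp⟩
  haveI : NeZero (p ^ N) := ⟨pow_ne_zero _ hp.pos.ne'⟩
  -- p does not divide k
  have hpk : ¬ p ∣ k := by
    intro hpk
    have h1 : k ^ m ≡ 1 [MOD p] := hkm.of_dvd (dvd_pow_self p hN.ne')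
    have h2 : p ∣ k ^ m := hpk.trans (dvd_pow_self k hm0.ne')
    have h3 : (0 : ℕ) ≡ 1 [MOD p] := ((Nat.modEq_zero_iff_dvd).mpr h2).symm.trans h1
    have h4 : p ∣ 1 := (Nat.modEq_iff_dvd' (Nat.zero_le 1)).mp h3
    exact hp.ne_one (Nat.dvd_one.mp (by simpa using h4))
  have hk0 : 1 ≤ k := by
    rcases Nat.eq_zero_or_pos k with h | h
    · exact absurd (h ▸ dvd_zero p) hpk
    · exact h
  have hco : Nat.Coprime k (p ^ N) :=
    Nat.Coprime.pow_right _ (Nat.coprime_comm.mp (hp.coprime_iff_not_dvd.mpr hpk))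
  set u : (ZMod (p ^ N))ˣ := ZMod.unitOfCoprime k hco with hu
  have hum : u ^ m = 1 := by
    apply Units.ext
    push_cast [hu, ZMod.coe_unitOfCoprime]
    have : ((k ^ m : ℕ) : ZMod (p ^ N)) = ((1 : ℕ) : ZMod (p ^ N)) :=
      (ZMod.natCast_eq_natCast_iff _ _ _).mpr hkm
    simpa using this
  intro hdvd
  -- u lies in the kernel of the reduction map
  have hpdvd : p ∣ p ^ N := dvd_pow_self p hN.ne'
  set φ := ZMod.unitsMap hpdvd with hφ
  have hker : u ∈ φ.ker := by
    have h1 : (φ u : ZMod p) = (k : ZMod p) := by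
      rw [hφ, ZMod.unitsMap, Units.coe_map, hu, ZMod.coe_unitOfCoprime]
      simp
    have h3 : (k : ZMod p) = ((1 : ℕ) : ZMod p) := by
      rw [ZMod.natCast_eq_natCast_iff]
      exact ((Nat.modEq_iff_dvd' hk0).mpr hdvd).symm
    rw [MonoidHom.mem_ker]
    apply Units.ext
    rw [h1, h3]
    simp
  -- the kernel has p-power order
  have hcard_tot : Nat.card (ZMod (p ^ N))ˣ = p ^ (N - 1) * (p - 1) := by
    rw [Nat.card_eq_fintype_card, ZMod.card_units_eq_totient, Nat.totient_prime_pow hp hN]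
  have hcard_p : Nat.card (ZMod p)ˣ = p - 1 := by
    haveI : NeZero p := ⟨hp.pos.ne'⟩
    rw [Nat.card_eq_fintype_card, ZMod.card_units_eq_totient, Nat.totient_prime hp]
  have hsurj : Function.Surjective φ := ZMod.unitsMap_surjective hpdvd
  have hrange : φ.range = ⊤ := MonoidHom.range_eq_top.mpr hsurj
  have hidx : (φ.ker).index = p - 1 := by
    rw [Subgroup.index_ker, hrange]
    rw [← hcard_p]
    exact Nat.card_congr Subgroup.topEquiv.toEquiv
  have hkercard : Nat.card φ.ker = p ^ (N - 1) := by
    have h5 := Subgroup.index_mul_card φ.ker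
    rw [hidx, hcard_tot] at h5
    have hp1 : 0 < p - 1 := Nat.sub_pos_of_lt hp.one_lt
    have h7 : (p - 1) * Nat.card φ.ker = (p - 1) * p ^ (N - 1) := h5.trans (Nat.mul_comm _ _)
    exact Nat.eq_of_mul_eq_mul_left hp1 h7
  have hord1 : orderOf u ∣ p ^ (N - 1) := hkercard ▸ Subgroup.orderOf_dvd_natCard φ.ker hker
  have hord2 : orderOf u ∣ m := orderOf_dvd_of_pow_eq_one hum
  obtain ⟨j, hj, hje⟩ := (Nat.dvd_prime_pow hp).mp hord1
  have hj0 : j = 0 := by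
    by_contra hj0
    exact hm (dvd_trans (dvd_trans (dvd_pow_self p hj0) (hje ▸ dvd_refl _)) hord2)
  have hu1 : u = 1 := orderOf_eq_one_iff.mp (by rw [hje, hj0, pow_zero])
  apply hk1
  have : ((k : ℕ) : ZMod (p ^ N)) = ((1 : ℕ) : ZMod (p ^ N)) := by
    have := congrArg (Units.val) hu1
    rw [hu, ZMod.coe_unitOfCoprime] at this
    simpa using this
  exact (ZMod.natCast_eq_natCast_iff _ _ _).mp this

end NT

set_option linter.unusedSectionVars false

section Tools

variable {X : Type*} [Group X] [Finite X] {p : ℕ} [Fact p.Prime]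

lemma subgroup_eq_of_le_card {A B : Subgroup X} (h : A ≤ B)
    (hc : Nat.card B ≤ Nat.card A) : A = B := by
  have hcard : Nat.card (A.subgroupOf B) = Nat.card A :=
    Nat.card_congr (Subgroup.subgroupOfEquivOfLe h).toEquiv
  have hmul := Subgroup.index_mul_card (A.subgroupOf B)
  rw [hcard] at hmul
  have hApos : 0 < Nat.card A := Nat.card_pos
  have hle : (A.subgroupOf B).index ≤ 1 := by
    by_contra hgt
    push_neg at hgt
    have : 2 * Nat.card A ≤ (A.subgroupOf B).index * Nat.card A :=
      Nat.mul_le_mul_right _ hgt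
    rw [hmul] at this
    omega
  have hne : (A.subgroupOf B).index ≠ 0 := Subgroup.index_ne_zero_of_finite
  have hidx : (A.subgroupOf B).index = 1 := by omega
  exact le_antisymm h (Subgroup.subgroupOf_eq_top.mp (Subgroup.index_eq_one.mp hidx))

/-- a `p`-element of the normalizer of a Sylow subgroup lies in it. -/
lemma pelem_mem_sylow (P : Sylow p X) {v : X} (hv : v ∈ Subgroup.normalizer ((P : Subgroup X) : Set X))
    {α : ℕ} (hα : orderOf v = p ^ α) : v ∈ (P : Subgroup X) := by
  have h1 : IsPGroup p (Subgroup.zpowers v) :=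
    IsPGroup.of_card (by rw [Nat.card_zpowers, hα])
  have h2 : IsPGroup p ((Subgroup.zpowers v) ⊔ (P : Subgroup X) : Subgroup X) :=
    IsPGroup.to_sup_of_normal_right' h1 P.2 (by rwa [Subgroup.zpowers_le])
  have h3 := P.3 h2 le_sup_right
  have h4 : v ∈ (Subgroup.zpowers v ⊔ (P : Subgroup X) : Subgroup X) :=
    Subgroup.mem_sup_left (Subgroup.mem_zpowers v)
  rwa [h3] at h4

lemma exists_gen {P : Subgroup X} (h : IsCyclic ↥P) :
    ∃ x ∈ P, (∀ y ∈ P, ∃ j : ℕ, y = x ^ j) ∧ orderOf x = Nat.card ↥P := by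
  obtain ⟨g, hg⟩ := h.exists_generator
  refine ⟨(g : X), g.2, ?_, ?_⟩
  · intro y hy
    have h2 := hg ⟨y, hy⟩
    rw [← mem_powers_iff_mem_zpowers] at h2
    obtain ⟨j, hj⟩ := h2
    refine ⟨j, ?_⟩
    have h3 := congrArg (Subtype.val) hj
    simpa using h3.symm
  · have h5 : orderOf ((g : X)) = orderOf g := orderOf_injective P.subtype P.subtype_injective g
    rw [h5]
    exact orderOf_eq_card_of_forall_mem_zpowers hg

lemma commute_of_gen {P : Subgroup X} {x : X} (hgen : ∀ y ∈ P, ∃ j : ℕ, y = x ^ j)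
    {a b : X} (ha : a ∈ P) (hb : b ∈ P) : Commute a b := by
  obtain ⟨i, rfl⟩ := hgen a ha
  obtain ⟨j, rfl⟩ := hgen b hb
  exact (Commute.refl x).pow_pow i j

/-- all order-p elements of a cyclic p-group generate the same subgroup -/
lemma zpowers_eq_of_orderOf_p {P : Subgroup X} {x : X} (hgen : ∀ y ∈ P, ∃ j : ℕ, y = x ^ j)
    {n : ℕ} (hox : orderOf x = p ^ n)
    {y z : X} (hy : y ∈ P) (hz : z ∈ P)
    (hyo : orderOf y = p) (hzo : orderOf z = p) :
    Subgroup.zpowers y = Subgroup.zpowers z := by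
  have hp := (Fact.out : p.Prime)
  have key : ∀ w ∈ P, orderOf w = p → Subgroup.zpowers w = Subgroup.zpowers (x ^ p ^ (n - 1)) := by
    intro w hw hwo
    obtain ⟨j, rfl⟩ := hgen w hw
    have hn1 : 1 ≤ n := by
      by_contra hn0
      push_neg at hn0
      interval_cases n
      · rw [pow_zero, orderOf_eq_one_iff] at hox
        rw [hox, one_pow, orderOf_one] at hwo
        exact hp.ne_one hwo.symm
    have hord : orderOf (x ^ j) = orderOf x / Nat.gcd (orderOf x) j := orderOf_pow x
    rw [hox, hwo] at hord
    have hgdvd : Nat.gcd (p ^ n) j ∣ p ^ n := Nat.gcd_dvd_left _ _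
    have hmul : p * Nat.gcd (p ^ n) j = p ^ n := by
      have h8 := Nat.div_mul_cancel hgdvd
      rwa [← hord] at h8
    have hgeq : Nat.gcd (p ^ n) j = p ^ (n - 1) := by
      have : p * Nat.gcd (p ^ n) j = p * p ^ (n - 1) := by
        rw [hmul, ← pow_succ']
        congr 1
        omega
      exact Nat.eq_of_mul_eq_mul_left hp.pos this
    have hjdvd : p ^ (n - 1) ∣ j := hgeq ▸ Nat.gcd_dvd_right _ _
    obtain ⟨t, rfl⟩ := hjdvd
    have hle : Subgroup.zpowers (x ^ (p ^ (n - 1) * t)) ≤ Subgroup.zpowers (x ^ p ^ (n - 1)) := by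
      rw [Subgroup.zpowers_le, pow_mul]
      exact pow_mem (Subgroup.mem_zpowers _) t
    apply subgroup_eq_of_le_card hle
    rw [Nat.card_zpowers, Nat.card_zpowers, hwo]
    have : orderOf (x ^ p ^ (n - 1)) = p := by
      rw [orderOf_pow x, hox]
      have : Nat.gcd (p ^ n) (p ^ (n - 1)) = p ^ (n - 1) :=
        Nat.gcd_eq_right (pow_dvd_pow p (by omega))
      rw [this, Nat.pow_div (by omega) hp.pos]
      have h9 : n - (n - 1) = 1 := by omega
      rw [h9, pow_one]
    rw [this]
  rw [key _ hy hyo, key _ hz hzo]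

end Tools

section KeyLemma

lemma sylow_gen_conj {Y : Type*} [Group Y] [Finite Y] {p : ℕ} [Fact p.Prime] (S : Sylow p Y)
    (hcyc : IsCyclic ↥(S : Subgroup Y))
    (hnc : ¬ Subgroup.normalizer ((S : Subgroup Y) : Set Y) ≤ Subgroup.centralizer (S : Subgroup Y)) :
    ∃ u w : Y, u ∈ (S : Subgroup Y) ∧ (∀ y ∈ (S : Subgroup Y), ∃ j : ℕ, y = u ^ j) ∧
      (u⁻¹ * (w * u * w⁻¹)) ∈ (S : Subgroup Y) ∧
      orderOf (u⁻¹ * (w * u * w⁻¹)) = Nat.card ↥(S : Subgroup Y) := by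
  have hp : p.Prime := Fact.out
  obtain ⟨x, hxS, hgen, hox⟩ := exists_gen hcyc
  obtain ⟨n, hn⟩ := IsPGroup.iff_card.mp S.2
  rw [hn] at hox
  have hn1 : 0 < n := by
    rcases Nat.eq_zero_or_pos n with h0 | h
    · exfalso
      apply hnc
      intro g _
      rw [Subgroup.mem_centralizer_iff]
      intro y hy
      obtain ⟨j, rfl⟩ := hgen y hy
      have hx1 : x = 1 := by
        rw [h0, pow_zero, orderOf_eq_one_iff] at hox
        exact hox
      rw [hx1, one_pow, one_mul, mul_one]
    · exact h
  obtain ⟨ν, hν1, hν2⟩ := SetLike.not_le_iff_exists.mp hnc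
  have hTcent : ∀ v : Y, v ∈ Subgroup.normalizer ((S : Subgroup Y) : Set Y) → (∃ α : ℕ, orderOf v = p ^ α) →
      v ∈ Subgroup.centralizer (S : Subgroup Y) := by
    rintro v hv ⟨α, hα⟩
    have hvS : v ∈ (S : Subgroup Y) := pelem_mem_sylow S hv hα
    rw [Subgroup.mem_centralizer_iff]
    intro y hy
    exact (commute_of_gen hgen hy hvS).eq
  set o := orderOf ν with ho
  have ho0 : o ≠ 0 := (orderOf_pos ν).ne'
  set pa := p ^ (o.factorization p) with hpa
  set β := o / pa with hβ
  have hpa_dvd : pa ∣ o := Nat.ordProj_dvd o p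
  have hβ_dvd : β ∣ o := Nat.div_dvd_of_dvd hpa_dvd
  set w := ν ^ pa with hwdef
  have hwo : orderOf w = β := by
    rw [hwdef, orderOf_pow, ← ho, Nat.gcd_eq_right hpa_dvd]
  have hpβ : ¬ p ∣ β := Nat.not_dvd_ordCompl hp ho0
  have hw_norm : w ∈ Subgroup.normalizer ((S : Subgroup Y) : Set Y) := pow_mem hν1 pa
  have hw_cent : w ∉ Subgroup.centralizer (S : Subgroup Y) := by
    intro hwc
    apply hν2
    have hνp : ν ^ β ∈ Subgroup.centralizer (S : Subgroup Y) := by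
      apply hTcent _ (pow_mem hν1 β)
      refine ⟨o.factorization p, ?_⟩
      rw [orderOf_pow, ← ho, Nat.gcd_eq_right hβ_dvd, hβ]
      exact Nat.div_div_self hpa_dvd ho0
    have hco : Nat.Coprime pa β := (Nat.coprime_ordCompl hp ho0).pow_left _
    obtain ⟨a, b, hab⟩ := hco.isCoprime
    have hν_eq : ν = (ν ^ pa) ^ a * (ν ^ β) ^ b := by
      have h1 : ν = ν ^ ((a * pa + b * β) : ℤ) := by rw [hab, zpow_one]
      conv_lhs => rw [h1]
      rw [mul_comm a (pa : ℤ), mul_comm b (β : ℤ), zpow_add, zpow_mul, zpow_mul,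
        zpow_natCast, zpow_natCast]
    have hfin : (ν ^ pa) ^ a * (ν ^ β) ^ b ∈ Subgroup.centralizer (S : Subgroup Y) :=
      mul_mem (zpow_mem hwc a) (zpow_mem hνp b)
    rwa [← hν_eq] at hfin
  have hconj : w * x * w⁻¹ ∈ (S : Subgroup Y) := (Subgroup.mem_normalizer_iff.mp hw_norm x).mp hxS
  obtain ⟨k, hk⟩ := hgen _ hconj
  set m := orderOf w with hm
  have hm0 : 0 < m := orderOf_pos w
  have hmp : ¬ p ∣ m := by rw [hwo]; exact hpβ
  have hk1 : ¬ (k ≡ 1 [MOD p ^ n]) := by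
    intro hmod
    apply hw_cent
    have hxk : x ^ k = x := by
      have h6 : x ^ k = x ^ 1 := (pow_eq_pow_iff_modEq).mpr (by rw [hox]; exact hmod)
      rwa [pow_one] at h6
    have hwx : Commute w x := by
      have h7 : w * x * w⁻¹ = x := by rw [hk, hxk]
      have h8 := congrArg (· * w) h7
      exact (by simpa [mul_assoc] using h8 : w * x = x * w)
    rw [Subgroup.mem_centralizer_iff]
    intro y hy
    obtain ⟨j, rfl⟩ := hgen y hy
    exact ((hwx.pow_right j).symm).eq
  have hiter : ∀ j : ℕ, w ^ j * x * (w ^ j)⁻¹ = x ^ (k ^ j) := by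
    intro j
    induction j with
    | zero => simp
    | succ j ih =>
        have h1 : w ^ (j + 1) = w * w ^ j := by rw [pow_succ']
        rw [h1, mul_inv_rev]
        have h2 : w * w ^ j * x * ((w ^ j)⁻¹ * w⁻¹) = w * (w ^ j * x * (w ^ j)⁻¹) * w⁻¹ := by
          group
        rw [h2, ih]
        have h3 := map_pow (MulAut.conj w) x (k ^ j)
        simp only [MulAut.conj_apply] at h3
        rw [h3, hk, ← pow_mul]
        congr 1
        rw [pow_succ]
        ring
  have hmod : k ^ m ≡ 1 [MOD p ^ n] := by
    have h4 := hiter m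
    have hw1 : w ^ m = 1 := by rw [hm]; exact pow_orderOf_eq_one w
    rw [hw1] at h4
    simp only [one_mul, inv_one, mul_one] at h4
    have h5 : x ^ (k ^ m) = x ^ 1 := by rw [pow_one]; exact h4.symm
    have h6 := (pow_eq_pow_iff_modEq).mp h5
    rwa [hox] at h6
  have hknd : ¬ p ∣ k - 1 := nt_lemma hp hn1 hmp hm0 hmod hk1
  have hk_ge1 : 1 ≤ k := by
    by_contra h
    push_neg at h
    interval_cases k
    · rw [pow_zero] at hk
      have hx1 : x = 1 := by
        have := congrArg (fun t => w⁻¹ * t * w) hk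
        simpa [mul_assoc] using this
      rw [hx1, orderOf_one] at hox
      have := Nat.one_lt_pow hn1.ne' hp.one_lt
      omega
  have hc_eq : x⁻¹ * (w * x * w⁻¹) = x ^ (k - 1) := by
    rw [hk]
    have h9 : x ^ k = x * x ^ (k - 1) := by
      rw [← pow_succ']
      congr 1
      omega
    rw [h9]
    group
  refine ⟨x, w, hxS, hgen, ?_, ?_⟩
  · rw [hc_eq]
    exact pow_mem hxS _
  · rw [hc_eq, hn, orderOf_pow x, hox]
    have hco : Nat.Coprime (p ^ n) (k - 1) :=
      Nat.Coprime.pow_left _ (hp.coprime_iff_not_dvd.mpr hknd)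
    rw [Nat.Coprime] at hco
    rw [hco, Nat.div_one]

end KeyLemma

section Main

open scoped Pointwise

universe u

theorem brauer_aux (p : ℕ) [Fact p.Prime] (N : ℕ) :
    ∀ (G : Type u) [Group G] [Finite G], Nat.card G ≤ N →
      ∀ (P : Sylow p G), IsCyclic ↥(P : Subgroup G) →
      ∀ W : Subgroup G, W.Normal → p ∣ Nat.card W → p ∣ W.index →
      IsPSolvable p G := by
  induction N with
  | zero =>
      intro G _ _ hcard
      exfalso
      have := Nat.card_pos (α := G)
      omega
  | succ N IH =>
      intro G _ _ hcard P hcyc W hW h1 h2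
      have hp : p.Prime := Fact.out
      have hPW : ¬ ((P : Subgroup G) ≤ W) := by
        intro hle
        exact P.not_dvd_index (h2.trans (Subgroup.index_dvd_of_le hle))
      set H : Subgroup G := W ⊔ ↑P with hH
      have hWH : W ≤ H := le_sup_left
      have hPH : (P : Subgroup G) ≤ H := le_sup_right
      set PH : Sylow p ↥H := P.subtype hPH with hPHdef
      have hPHcoe : (PH : Subgroup ↥H) = (P : Subgroup G).subgroupOf H := by
        rw [hPHdef]; exact Sylow.coe_subtype _ _
      have hPHcyc : IsCyclic ↥(PH : Subgroup ↥H) := by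
        rw [hPHcoe]
        exact isCyclic_of_surjective (Subgroup.subgroupOfEquivOfLe hPH).symm
          (Subgroup.subgroupOfEquivOfLe hPH).symm.surjective
      by_cases hB : Subgroup.normalizer ((PH : Subgroup ↥H) : Set ↥H) ≤ Subgroup.centralizer (PH : Subgroup ↥H)
      · -- Burnside's normal p-complement in H
        set KH : Subgroup ↥H := (MonoidHom.transferSylow PH hB).ker with hKH
        have hKHcard : ¬ p ∣ Nat.card KH := MonoidHom.not_dvd_card_ker_transferSylow PH hB
        have hKHcomp := MonoidHom.ker_transferSylow_isComplement' PH hB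
        have hKHidx : KH.index = Nat.card ↥(PH : Subgroup ↥H) := hKHcomp.symm.index_eq_card
        obtain ⟨n, hn⟩ := IsPGroup.iff_card.mp PH.2
        set V : Subgroup G := W ⊓ Subgroup.map H.subtype KH with hV
        have hVle : V ≤ W := inf_le_left
        have hVmem : ∀ v : G, v ∈ V → ¬ p ∣ orderOf v := by
          rintro v ⟨hvW, hvK⟩
          obtain ⟨kh, hkh, rfl⟩ := hvK
          intro hpd
          apply hKHcard
          have h3 : orderOf ((kh : G)) = orderOf kh :=
            orderOf_injective H.subtype H.subtype_injective kh
          exact dvd_trans (h3 ▸ hpd) (Subgroup.orderOf_dvd_natCard KH hkh)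
        have hVmem' : ∀ v : G, v ∈ W → ¬ p ∣ orderOf v → v ∈ V := by
          intro v hvW hvord
          refine ⟨hvW, ?_⟩
          set vH : ↥H := ⟨v, hWH hvW⟩ with hvHdef
          have hord : orderOf ((vH : G)) = orderOf vH :=
            orderOf_injective H.subtype H.subtype_injective vH
          have h4 : orderOf ((vH : ↥H ⧸ KH)) ∣ orderOf vH := orderOf_map_dvd (QuotientGroup.mk' KH) vH
          have h5 : orderOf ((vH : ↥H ⧸ KH)) ∣ Nat.card (↥H ⧸ KH) := orderOf_dvd_natCard _
          have hcardQ : Nat.card (↥H ⧸ KH) = p ^ n := by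
            rw [← Subgroup.index_eq_card, hKHidx, hn]
          have h6 : orderOf ((vH : ↥H ⧸ KH)) = 1 := by
            obtain ⟨j, hj, hje⟩ := (Nat.dvd_prime_pow hp).mp (hcardQ ▸ h5)
            rcases Nat.eq_zero_or_pos j with hj0 | hj1
            · rw [hje, hj0, pow_zero]
            · exfalso
              apply hvord
              have hdvd1 : p ∣ orderOf ((vH : ↥H ⧸ KH)) := hje ▸ dvd_pow_self p hj1.ne'
              have hov : orderOf v = orderOf vH := by
                rw [← hord]
              exact hov ▸ (hdvd1.trans h4)
          have h7 : vH ∈ KH := by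
            rw [← QuotientGroup.eq_one_iff]
            exact orderOf_eq_one_iff.mp h6
          exact ⟨vH, h7, rfl⟩
        have hVnormal : V.Normal := by
          constructor
          intro v hv g
          apply hVmem' _ (hW.conj_mem _ hv.1 g)
          have h8 : orderOf (g * v * g⁻¹) = orderOf v := by
            have h9 := orderOf_injective (MulAut.conj g).toMonoidHom
              (MulAut.conj g).injective v
            simpa [MulAut.conj_apply] using h9
          rw [h8]
          exact hVmem v hv
        by_cases hVbot : V = ⊥
        · -- V = ⊥ : W is a p-group contained in P
          have hWp : ∀ v : G, v ∈ W → ∃ α : ℕ, orderOf v = p ^ α := by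
            intro v hvW
            have ho0 : orderOf v ≠ 0 := (orderOf_pos v).ne'
            have hv' : v ^ (p ^ ((orderOf v).factorization p)) ∈ V := by
              apply hVmem' _ (pow_mem hvW _)
              rw [orderOf_pow, Nat.gcd_eq_right (Nat.ordProj_dvd (orderOf v) p)]
              exact Nat.not_dvd_ordCompl hp ho0
            rw [hVbot, Subgroup.mem_bot] at hv'
            obtain ⟨j, hj, hje⟩ := (Nat.dvd_prime_pow hp).mp (orderOf_dvd_of_pow_eq_one hv')
            exact ⟨j, hje⟩
          have hWP : W ≤ (P : Subgroup G) := by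
            have hWpg : IsPGroup p W := by
              intro g
              obtain ⟨α, hα⟩ := hWp (g : G) g.2
              refine ⟨α, ?_⟩
              have h28 : ((g : G)) ^ p ^ α = 1 := by
                rw [← hα]; exact pow_orderOf_eq_one _
              apply Subtype.ext
              push_cast
              exact h28
            obtain ⟨Q, hQ⟩ := hWpg.exists_le_sylow
            obtain ⟨g, hg⟩ := MulAction.exists_smul_eq G Q P
            intro v hvW
            have h30 : g⁻¹ * v * g ∈ W := by
              have h29 := hW.conj_mem v hvW g⁻¹
              simpa using h29
            have h31 : g⁻¹ * v * g ∈ Q := hQ h30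
            have h32 : (MulAut.conj g) • (g⁻¹ * v * g) ∈ (MulAut.conj g) • (Q : Subgroup G) :=
              Subgroup.smul_mem_pointwise_smul _ _ _ h31
            have h33 : (MulAut.conj g) • (Q : Subgroup G) = (P : Subgroup G) := by
              rw [← Sylow.coe_subgroup_smul, hg]
            rw [h33] at h32
            have h34 : (MulAut.conj g) • (g⁻¹ * v * g) = v := by
              simp [MulAut.smul_def, MulAut.conj_apply]
              group
            rwa [h34] at h32
          -- generator of P
          obtain ⟨xg, hxgP, hgenG, hoxg⟩ := exists_gen hcyc
          obtain ⟨nG, hnG⟩ := IsPGroup.iff_card.mp P.2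
          rw [hnG] at hoxg
          -- Cauchy in W
          obtain ⟨zw, hzw⟩ := exists_prime_orderOf_dvd_card' (G := ↥W) p h1
          set z : G := (zw : G) with hz
          have hzW : z ∈ W := zw.2
          have hoz : orderOf z = p := by
            rw [← hzw]
            exact orderOf_injective W.subtype W.subtype_injective zw
          have hzP : z ∈ (P : Subgroup G) := hWP hzW
          set Z := Subgroup.zpowers z with hZ
          have hZcard : Nat.card ↥Z = p := by rw [hZ, Nat.card_zpowers, hoz]
          have hZW : Z ≤ W := Subgroup.zpowers_le.mpr hzW
          have hU : ∀ y : G, y ∈ (P : Subgroup G) → orderOf y = p → Subgroup.zpowers y = Z :=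
            fun y hy hyo => zpowers_eq_of_orderOf_p hgenG hoxg hy hzP hyo hoz
          have hZnormal : Z.Normal := by
            constructor
            intro v hv g
            rw [hZ, Subgroup.mem_zpowers_iff] at hv
            obtain ⟨t, ht⟩ := hv
            have hgz : g * z * g⁻¹ ∈ W := hW.conj_mem z hzW g
            have hgzo : orderOf (g * z * g⁻¹) = p := by
              have h9 := orderOf_injective (MulAut.conj g).toMonoidHom (MulAut.conj g).injective z
              simp only [MulEquiv.coe_toMonoidHom, MulAut.conj_apply] at h9
              rw [← hoz]
              simpa using h9
            have h35 : Subgroup.zpowers (g * z * g⁻¹) = Z := hU _ (hWP hgz) hgzo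
            have h36 : g * v * g⁻¹ = (g * z * g⁻¹) ^ t := by
              rw [← ht]
              have h37 := map_zpow (MulAut.conj g) z t
              simpa [MulAut.conj_apply] using h37.symm
            rw [h36, ← h35]
            exact zpow_mem (Subgroup.mem_zpowers _) t
          set C := Subgroup.centralizer ({z} : Set G) with hC
          have hPC : (P : Subgroup G) ≤ C := by
            intro y hy
            rw [hC, Subgroup.mem_centralizer_iff]
            rintro h hh
            rw [Set.mem_singleton_iff] at hh
            rw [hh]
            exact (commute_of_gen hgenG hzP hy).eq
          have hCnormal : C.Normal := by
            constructor
            intro c hc g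
            rw [hC, Subgroup.mem_centralizer_iff] at hc ⊢
            intro h hh
            rw [Set.mem_singleton_iff] at hh
            rw [hh]
            have h38 : g⁻¹ * z * g ∈ Z := by
              have h39 := hZnormal.conj_mem z (Subgroup.mem_zpowers z) g⁻¹
              simpa using h39
            rw [Subgroup.mem_zpowers_iff] at h38
            obtain ⟨t, ht⟩ := h38
            have hzc : Commute z c := hc z rfl
            have h40 := (hzc.zpow_left t).map (MulAut.conj g).toMonoidHom
            simp only [MulEquiv.coe_toMonoidHom, MulAut.conj_apply] at h40
            have h41 : g * (z ^ t) * g⁻¹ = z := by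
              rw [ht]
              group
            rw [h41] at h40
            exact h40.eq
          by_cases hCG : C = ⊤
          · -- z is central: use the transfer map to P
            have hcent : ∀ g : G, z * g = g * z := by
              intro g
              have hgC : g ∈ C := by rw [hCG]; exact Subgroup.mem_top g
              rw [hC, Subgroup.mem_centralizer_iff] at hgC
              exact hgC z rfl
            haveI := hcyc
            letI : CommGroup ↥(P : Subgroup G) := IsCyclic.commGroup
            haveI : (P : Subgroup G).FiniteIndex := ⟨Subgroup.index_ne_zero_of_finite⟩
            set τ := MonoidHom.transfer (MonoidHom.id ↥(P : Subgroup G)) with hτ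
            have hkey : ∀ (k : ℕ) (g₀ : G), g₀⁻¹ * z ^ k * g₀ ∈ (P : Subgroup G) →
                g₀⁻¹ * z ^ k * g₀ = z ^ k := by
              intro k g₀ _
              have hzg : Commute z g₀ := hcent g₀
              have hcomm : z ^ k * g₀ = g₀ * z ^ k := (hzg.pow_left k).eq
              rw [mul_assoc, hcomm, ← mul_assoc, inv_mul_cancel, one_mul]
            have hτz : τ z = MonoidHom.id ↥(P : Subgroup G)
                ⟨z ^ (P : Subgroup G).index, MonoidHom.transfer_eq_pow_aux z hkey⟩ :=
              MonoidHom.transfer_eq_pow (MonoidHom.id ↥(P : Subgroup G)) z hkey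
            have hzpow : z ^ (P : Subgroup G).index ≠ 1 := by
              intro hEq
              have h59 := orderOf_dvd_of_pow_eq_one hEq
              rw [hoz] at h59
              exact P.not_dvd_index h59
            have hzK : z ∉ τ.ker := by
              intro hzk
              rw [MonoidHom.mem_ker, hτz] at hzk
              apply hzpow
              exact congrArg Subtype.val hzk
            set K := τ.ker with hKdef
            have hKnorm : K.Normal := MonoidHom.normal_ker τ
            have hKcard : ¬ p ∣ Nat.card ↥K := by
              intro hpd
              obtain ⟨ue, hue⟩ := exists_prime_orderOf_dvd_card' (G := ↥K) p hpd
              set u : G := (ue : G) with hu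
              have huK : u ∈ K := ue.2
              have hou : orderOf u = p := by
                rw [← hue]
                exact orderOf_injective K.subtype K.subtype_injective ue
              have hupg : IsPGroup p (Subgroup.zpowers u) :=
                IsPGroup.of_card (by rw [Nat.card_zpowers, hou, pow_one])
              obtain ⟨Q, hQ⟩ := hupg.exists_le_sylow
              obtain ⟨g, hg⟩ := MulAction.exists_smul_eq G Q P
              have huQ : u ∈ Q := hQ (Subgroup.mem_zpowers u)
              have h60 : (MulAut.conj g) • u ∈ (MulAut.conj g) • (Q : Subgroup G) :=
                Subgroup.smul_mem_pointwise_smul _ _ _ huQ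
              have h61 : (MulAut.conj g) • (Q : Subgroup G) = (P : Subgroup G) := by
                rw [← Sylow.coe_subgroup_smul, hg]
              rw [h61] at h60
              have h62 : (MulAut.conj g) • u = g * u * g⁻¹ := by
                simp [MulAut.smul_def, MulAut.conj_apply]
              rw [h62] at h60
              have h63 : orderOf (g * u * g⁻¹) = p := by
                have h9 := orderOf_injective (MulAut.conj g).toMonoidHom
                  (MulAut.conj g).injective u
                simp only [MulEquiv.coe_toMonoidHom, MulAut.conj_apply] at h9
                rw [← hou]
                simpa using h9
              have h64 : Subgroup.zpowers (g * u * g⁻¹) = Z := hU _ h60 h63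
              have h65 : z ∈ Subgroup.zpowers (g * u * g⁻¹) := by
                rw [h64]
                exact Subgroup.mem_zpowers z
              rw [Subgroup.mem_zpowers_iff] at h65
              obtain ⟨t, ht⟩ := h65
              have h66 : (g * u * g⁻¹) ^ t = g * (u ^ t) * g⁻¹ := by
                have h67 := map_zpow (MulAut.conj g) u t
                simpa [MulAut.conj_apply] using h67.symm
              apply hzK
              rw [← ht, h66]
              exact hKnorm.conj_mem _ (Subgroup.zpow_mem K huK t) g
            have hKidx : ∃ j : ℕ, K.index = p ^ j := by
              have h70 : K.index = Nat.card τ.range := Subgroup.index_ker τ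
              have h71 : Nat.card τ.range ∣ Nat.card ↥(P : Subgroup G) :=
                Subgroup.card_subgroup_dvd_card τ.range
              rw [hnG] at h71
              obtain ⟨j, hj, hje⟩ := (Nat.dvd_prime_pow hp).mp h71
              exact ⟨j, by rw [h70, hje]⟩
            set π := QuotientGroup.mk' K with hπdef2
            have hπsur2 : Function.Surjective π := QuotientGroup.mk'_surjective K
            have hker2 : π.ker = K := QuotientGroup.ker_mk' K
            have hsolvQ : IsPSolvable p (G ⧸ K) := by
              apply isPSolvable_onestep
              left
              obtain ⟨j, hj⟩ := hKidx
              exact ⟨j, by rw [← Subgroup.index_eq_card, hj]⟩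
            exact isPSolvable_prepend π hπsur2 (Or.inr (by rw [hker2]; exact hKcard)) hsolvQ
          · -- C proper: apply induction hypothesis to C
            have hzC : z ∈ C := by
              rw [hC, Subgroup.mem_centralizer_iff]
              intro h hh
              rw [Set.mem_singleton_iff] at hh
              rw [hh]
            have hZC : Z ≤ C := Subgroup.zpowers_le.mpr hzC
            have hCle : Nat.card ↥C ≤ N := by
              have hle : Nat.card ↥C ≤ Nat.card ↥(⊤ : Subgroup G) :=
                Subgroup.card_le_of_le le_top
              rw [Nat.card_congr Subgroup.topEquiv.toEquiv] at hle
              have hne : Nat.card ↥C ≠ Nat.card G := by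
                intro hEq
                exact hCG (Subgroup.eq_top_of_card_eq C hEq)
              omega
            set PC : Sylow p ↥C := P.subtype hPC with hPCdef
            have hPCcoe : (PC : Subgroup ↥C) = (P : Subgroup G).subgroupOf C := by
              rw [hPCdef]; exact Sylow.coe_subtype _ _
            have hPCcyc : IsCyclic ↥(PC : Subgroup ↥C) := by
              rw [hPCcoe]
              exact isCyclic_of_surjective (Subgroup.subgroupOfEquivOfLe hPC).symm
                (Subgroup.subgroupOfEquivOfLe hPC).symm.surjective
            have hZ'norm : (Z.subgroupOf C).Normal := hZnormal.comap C.subtype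
            have hZ'card : Nat.card ↥(Z.subgroupOf C) = p := by
              rw [Nat.card_congr (Subgroup.subgroupOfEquivOfLe hZC).toEquiv]
              exact hZcard
            -- p^2 divides the order of P
            have hpp : p * p ∣ Nat.card ↥(P : Subgroup G) := by
              have hrel : W.relIndex (P : Subgroup G) * (P : Subgroup G).index = W.index :=
                Subgroup.relIndex_mul_index hWP
              have hpr : p ∣ W.relIndex (P : Subgroup G) := by
                rcases (Nat.Prime.dvd_mul hp).mp (hrel ▸ h2) with h | h
                · exact h
                · exact absurd h P.not_dvd_index
              have hcardeq : W.relIndex (P : Subgroup G) * Nat.card ↥W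
                  = Nat.card ↥(P : Subgroup G) := by
                have h50 := Subgroup.index_mul_card (W.subgroupOf (P : Subgroup G))
                rw [Nat.card_congr (Subgroup.subgroupOfEquivOfLe hWP).toEquiv] at h50
                exact h50
              rw [← hcardeq]
              exact mul_dvd_mul hpr h1
            have hppC : p * p ∣ Nat.card ↥C :=
              hpp.trans (Subgroup.card_dvd_of_le hPC)
            have hZ'idx : p ∣ (Z.subgroupOf C).index := by
              have h51 := Subgroup.index_mul_card (Z.subgroupOf C)
              rw [hZ'card] at h51
              obtain ⟨c, hc⟩ := hppC
              rw [← h51] at hc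
              have h52 : (Z.subgroupOf C).index = p * c :=
                Nat.eq_of_mul_eq_mul_right hp.pos (by rw [hc]; ring)
              exact ⟨c, h52⟩
            have hsolvC := IH ↥C hCle PC hPCcyc (Z.subgroupOf C) hZ'norm
              (by rw [hZ'card]) hZ'idx
            have hCidx : ¬ p ∣ C.index := by
              intro hdvd
              exact P.not_dvd_index (hdvd.trans (Subgroup.index_dvd_of_le hPC))
            exact isPSolvable_append_top C hCnormal (Or.inr hCidx) hsolvC

        · -- V ≠ ⊥ : pass to the quotient G ⧸ V
          set π := QuotientGroup.mk' V with hπdef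
          have hπsur : Function.Surjective π := QuotientGroup.mk'_surjective V
          have hkerπ : π.ker = V := QuotientGroup.ker_mk' V
          have hVcard : ¬ p ∣ Nat.card V := by
            intro hpd
            obtain ⟨ve, hve⟩ := exists_prime_orderOf_dvd_card' (G := ↥V) p hpd
            apply hVmem (ve : G) ve.2
            have h19 : orderOf ((ve : G)) = p := by
              rw [← hve]
              exact orderOf_injective V.subtype V.subtype_injective ve
            rw [h19]
          set P' : Sylow p (G ⧸ V) := P.mapSurjective hπsur with hP'def
          have hP'coe : (P' : Subgroup (G ⧸ V)) = Subgroup.map π (P : Subgroup G) := rfl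
          have hP'cyc : IsCyclic ↥(P' : Subgroup (G ⧸ V)) := by
            have := isCyclic_of_surjective (π.subgroupMap (P : Subgroup G))
              (MonoidHom.subgroupMap_surjective π (P : Subgroup G))
            rw [hP'coe]
            exact this
          set W' := Subgroup.map π W with hW'def
          have hW'norm : W'.Normal := hW.map π hπsur
          have hrestr : Nat.card ↥W = Nat.card ↥W' * Nat.card ↥V := by
            have hker : (π.domRestrict W).ker = V.subgroupOf W := by
              rw [MonoidHom.ker_restrict, hkerπ]
            have hrange : (π.domRestrict W).range = W' := by rw [MonoidHom.restrict_range]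
            have h20 := Subgroup.index_mul_card (π.domRestrict W).ker
            have h21 : (π.domRestrict W).ker.index = Nat.card ↥W' := by
              rw [Subgroup.index_ker, hrange]
            have h22 : Nat.card (π.domRestrict W).ker = Nat.card ↥V := by
              rw [hker]
              exact Nat.card_congr (Subgroup.subgroupOfEquivOfLe hVle).toEquiv
            rw [h21, h22] at h20
            exact h20.symm
          have h1' : p ∣ Nat.card ↥W' := by
            rcases (Nat.Prime.dvd_mul hp).mp (hrestr ▸ h1) with h | h
            · exact h
            · exact absurd h hVcard
          have h2' : p ∣ W'.index := by
            have h23 : W'.index = W.index := by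
              calc W'.index = (W'.comap π).index :=
                    (Subgroup.index_comap_of_surjective _ hπsur).symm
                _ = W.index := by
                    rw [hW'def, Subgroup.comap_map_eq, hkerπ, sup_of_le_left hVle]
            rw [h23]
            exact h2
          have hVlt : 1 < Nat.card ↥V := (Subgroup.one_lt_card_iff_ne_bot (H := V)).mpr hVbot
          have hqle : Nat.card (G ⧸ V) ≤ N := by
            have h25 : V.index * Nat.card ↥V = Nat.card G := Subgroup.index_mul_card V
            have h26 : V.index = Nat.card (G ⧸ V) := Subgroup.index_eq_card V
            have hqpos : 0 < Nat.card (G ⧸ V) := Nat.card_pos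
            have h27 := Nat.mul_le_mul_left (Nat.card (G ⧸ V)) hVlt
            rw [h26] at h25
            omega
          have hsolv' := IH (G ⧸ V) hqle P' hP'cyc W' hW'norm h1' h2'
          exact isPSolvable_prepend π hπsur (Or.inr (by rw [hkerπ]; exact hVcard)) hsolv'

      · exfalso
        obtain ⟨u, w, huS, hugen, hcS, hcord⟩ := sylow_gen_conj PH hPHcyc hB
        set x : G := ((u : ↥H) : G) with hx
        have hxP : x ∈ (P : Subgroup G) := by
          have h10 := huS
          rw [hPHcoe] at h10
          exact h10
        set wG : G := ((w : ↥H) : G) with hwG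
        have hwGH : wG ∈ H := w.2
        set c : G := x⁻¹ * (wG * x * wG⁻¹) with hc
        have hcc : c = ((u⁻¹ * (w * u * w⁻¹) : ↥H) : G) := by
          rw [hc, hx, hwG]
          push_cast
          rfl
        have hcP : c ∈ (P : Subgroup G) := by
          have h11 := hcS
          rw [hPHcoe] at h11
          rw [hcc]
          exact h11
        have hcord' : orderOf c = Nat.card ↥(P : Subgroup G) := by
          have h16 : orderOf ((u⁻¹ * (w * u * w⁻¹) : ↥H) : G) = orderOf (u⁻¹ * (w * u * w⁻¹)) :=
            orderOf_injective H.subtype H.subtype_injective (u⁻¹ * (w * u * w⁻¹))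
          rw [hcc, h16, hcord, hPHcoe]
          exact Nat.card_congr (Subgroup.subgroupOfEquivOfLe hPH).toEquiv
        have hgenP : ∀ y ∈ (P : Subgroup G), ∃ j : ℕ, y = x ^ j := by
          intro y hy
          have hyH : y ∈ H := hPH hy
          have h12 : (⟨y, hyH⟩ : ↥H) ∈ (PH : Subgroup ↥H) := by
            rw [hPHcoe]
            exact hy
          obtain ⟨j, hj⟩ := hugen _ h12
          refine ⟨j, ?_⟩
          have h13 := congrArg (Subtype.val) hj
          simpa using h13
        have hcW : c ∈ W := by
          set π := QuotientGroup.mk' W with hπdef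
          have hmapW : Subgroup.map π W = ⊥ := by
            rw [eq_bot_iff]
            rintro q ⟨g, hg, rfl⟩
            have : π g = 1 := (QuotientGroup.eq_one_iff g).mpr hg
            simp [this]
          have hπw : π wG ∈ Subgroup.map π (P : Subgroup G) := by
            have h14 : π wG ∈ Subgroup.map π H := ⟨wG, hwGH, rfl⟩
            rw [hH, Subgroup.map_sup, hmapW, bot_sup_eq] at h14
            exact h14
          obtain ⟨y, hyP, hπy⟩ := hπw
          have hcomm : Commute (π y) (π x) := (commute_of_gen hgenP hyP hxP).map π
          have hπc : π c = 1 := by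
            rw [hc]
            have h15 : π (x⁻¹ * (wG * x * wG⁻¹)) = (π x)⁻¹ * (π wG * π x * (π wG)⁻¹) := by
              simp [map_mul, map_inv]
            rw [h15, ← hπy]
            rw [hcomm.eq]
            group
          exact (QuotientGroup.eq_one_iff c).mp hπc
        have hzle : Subgroup.zpowers c ≤ (P : Subgroup G) := Subgroup.zpowers_le.mpr hcP
        have heq : Subgroup.zpowers c = (P : Subgroup G) :=
          subgroup_eq_of_le_card hzle (by rw [Nat.card_zpowers, hcord'])
        apply hPW
        rw [← heq]
        exact Subgroup.zpowers_le.mpr hcW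

end Main

/-- (Brauer)  If a finite group `G` has a cyclic Sylow `p`-subgroup and is not `p`-solvable,
then every normal subgroup `W ⊴ G` has either order not divisible by `p` or index not
divisible by `p`. -/
theorem stmt_15 {G : Type*} [Group G] [Finite G] {p : ℕ} [Fact p.Prime]
    (P : Sylow p G) (hcyc : IsCyclic (P : Subgroup G)) (hsol : ¬ IsPSolvable p G)
    (W : Subgroup G) (hW : W.Normal) :
    ¬ p ∣ Nat.card W ∨ ¬ p ∣ W.index := by
  by_contra h
  push_neg at h
  exact hsol (brauer_aux p (Nat.card G) G le_rfl P hcyc W hW h.1 h.2)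
end
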